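/- arXiv:1703.07097 — 2 statements merged into one kernel-verified Lean document; each statement's English description precedes it below -/
import Mathlib

section
/- Let Γ be a z-knotted combinatorial triangulation. Then for every face F of Γ exactly one of the following holds: (1) exactly one of the three edges of F is of second type, or (2) all three edges of F are of second type. (In particular it is impossible that exactly two edges of F are of second type, or that all three edges of F are of first type.) -/
universe u v

/-- The data of an embedded graph: a simple graph together with a collection of
(triangular) faces, each face recorded as the finite set of its vertices. -/
structure PreTriangulation (V : Type u) where
  graph : SimpleGraph V
  faces : Set (Finset V)

namespace PreTriangulation

variable {V : Type u} {V' : Type v}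

/-- `T` is a combinatorial triangulation: a finite simple connected graph together with
a collection of faces, each face being a set of three pairwise adjacent vertices, such that
every edge lies in exactly two faces and two distinct faces share at most one edge. -/
structure IsTriangulation [DecidableEq V] (T : PreTriangulation V) : Prop where
  finiteVerts : Finite V
  connected : T.graph.Connected
  face_card : ∀ F ∈ T.faces, F.card = 3
  face_adj : ∀ F ∈ T.faces, ∀ x ∈ F, ∀ y ∈ F, x ≠ y → T.graph.Adj x y
  edge_in_two_faces : ∀ x y : V, T.graph.Adj x y →
    {F | F ∈ T.faces ∧ x ∈ F ∧ y ∈ F}.ncard = 2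
  faces_share_at_most_one_edge :
    ∀ F ∈ T.faces, ∀ G ∈ T.faces, F ≠ G → (F ∩ G).card ≤ 2

section

variable [DecidableEq V] [DecidableEq V']

/-- A zigzag in `T`: a cyclic sequence of vertices (encoded as a periodic function `ℤ → V`
whose minimal period `n` is the length of the zigzag, with `n > 3`) such that any two
consecutive vertices are distinct and adjacent, any three consecutive vertices lie in a
unique face, and the faces determined by two consecutive triples are distinct. -/
structure Zigzag (T : PreTriangulation V) where
  n : ℕ
  three_lt_n : 3 < n
  seq : ℤ → V
  periodic : ∀ i : ℤ, seq (i + n) = seq i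
  n_minimal : ∀ m : ℕ, 0 < m → (∀ i : ℤ, seq (i + m) = seq i) → n ≤ m
  seq_ne : ∀ i : ℤ, seq i ≠ seq (i + 1)
  seq_adj : ∀ i : ℤ, T.graph.Adj (seq i) (seq (i + 1))
  face : ℤ → Finset V
  face_mem : ∀ i : ℤ, face i ∈ T.faces
  subset_face : ∀ i : ℤ, ({seq i, seq (i + 1), seq (i + 2)} : Finset V) ⊆ face i
  face_unique : ∀ i : ℤ, ∀ G ∈ T.faces,
    ({seq i, seq (i + 1), seq (i + 2)} : Finset V) ⊆ G → G = face i
  face_ne : ∀ i : ℤ, face i ≠ face (i + 1)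

variable {T : PreTriangulation V}

/-- Two zigzags are equivalent if they agree up to a cyclic shift or up to a cyclic
shift combined with reversal. -/
def ZigzagEquiv (Z Z' : T.Zigzag) : Prop :=
  (∃ k : ℤ, ∀ i : ℤ, Z'.seq i = Z.seq (i + k)) ∨
  (∃ k : ℤ, ∀ i : ℤ, Z'.seq i = Z.seq (k - i))

/-- `T` is z-knotted: it has exactly one zigzag up to cyclic shift and reversal. -/
def ZKnotted (T : PreTriangulation V) [DecidableEq V] : Prop :=
  Nonempty T.Zigzag ∧ ∀ Z Z' : T.Zigzag, ZigzagEquiv Z Z'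

/-- `T` has exactly two zigzags up to cyclic shift and reversal. -/
def HasExactlyTwoZigzags (T : PreTriangulation V) [DecidableEq V] : Prop :=
  ∃ Z₁ Z₂ : T.Zigzag, ¬ ZigzagEquiv Z₁ Z₂ ∧
    ∀ Z : T.Zigzag, ZigzagEquiv Z Z₁ ∨ ZigzagEquiv Z Z₂

/-- `T` has exactly three zigzags up to cyclic shift and reversal. -/
def HasExactlyThreeZigzags (T : PreTriangulation V) [DecidableEq V] : Prop :=
  ∃ Z₁ Z₂ Z₃ : T.Zigzag, ¬ ZigzagEquiv Z₁ Z₂ ∧ ¬ ZigzagEquiv Z₁ Z₃ ∧ ¬ ZigzagEquiv Z₂ Z₃ ∧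
    ∀ Z : T.Zigzag, ZigzagEquiv Z Z₁ ∨ ZigzagEquiv Z Z₂ ∨ ZigzagEquiv Z Z₃

namespace Zigzag

/-- The zigzag passes from `x` to `y` (in this order) at some position. -/
def Passes (Z : T.Zigzag) (x y : V) : Prop :=
  ∃ i : ℤ, Z.seq i = x ∧ Z.seq (i + 1) = y

/-- The zigzag passes from `x` to `y` (in this order) at two distinct positions
of the cyclic sequence. -/
def PassesTwice (Z : T.Zigzag) (x y : V) : Prop :=
  ∃ i j : ℤ, (i : ZMod Z.n) ≠ (j : ZMod Z.n) ∧
    Z.seq i = x ∧ Z.seq (i + 1) = y ∧ Z.seq j = x ∧ Z.seq (j + 1) = y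

/-- The edge `{x, y}` is of first type: the zigzag contains both `x, y` and `y, x`
as pairs of consecutive vertices. -/
def FirstTypeEdge (Z : T.Zigzag) (x y : V) : Prop := Z.Passes x y ∧ Z.Passes y x

/-- The edge `{x, y}` is of second type: the zigzag contains the same ordered pair
(`x, y` or `y, x`) twice. -/
def SecondTypeEdge (Z : T.Zigzag) (x y : V) : Prop :=
  Z.PassesTwice x y ∨ Z.PassesTwice y x

/-- The number of positions of the cyclic sequence at which the pair of consecutive
vertices equals `{x, y}` (in either order). -/
noncomputable def passCount (Z : T.Zigzag) (x y : V) : ℕ :=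
  Nat.card {i : Fin Z.n //
    (Z.seq ((i : ℕ) : ℤ) = x ∧ Z.seq (((i : ℕ) : ℤ) + 1) = y) ∨
    (Z.seq ((i : ℕ) : ℤ) = y ∧ Z.seq (((i : ℕ) : ℤ) + 1) = x)}

/-- The number of positions of the cyclic sequence at which the triple of consecutive
vertices has vertex set equal to `F`. -/
noncomputable def faceCount (Z : T.Zigzag) (F : Finset V) : ℕ :=
  Nat.card {i : Fin Z.n //
    ({Z.seq ((i : ℕ) : ℤ), Z.seq (((i : ℕ) : ℤ) + 1), Z.seq (((i : ℕ) : ℤ) + 2)} :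
      Finset V) = F}

/-- The three consecutive vertices of the zigzag at position `i` are `x, y, z`. -/
def TripleAt (Z : T.Zigzag) (i : ℤ) (x y z : V) : Prop :=
  Z.seq i = x ∧ Z.seq (i + 1) = y ∧ Z.seq (i + 2) = z

/-- The zigzag has the cyclic form `x₁,y₁,z₁, …, x₂,y₂,z₂, …, x₃,y₃,z₃, …`:
the three triples occur in this cyclic order within one period. -/
def CyclicTriples (Z : T.Zigzag) (x₁ y₁ z₁ x₂ y₂ z₂ x₃ y₃ z₃ : V) : Prop :=
  ∃ (i : ℤ) (p q : ℕ), 0 < p ∧ p < q ∧ q < Z.n ∧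
    Z.TripleAt i x₁ y₁ z₁ ∧ Z.TripleAt (i + p) x₂ y₂ z₂ ∧ Z.TripleAt (i + q) x₃ y₃ z₃

/-- `F` is a `(1,1,2)`-face: exactly one of its three edges is of second type. -/
def Is112Face (Z : T.Zigzag) (F : Finset V) : Prop :=
  ∃ x y z : V, F = {x, y, z} ∧ x ≠ y ∧ x ≠ z ∧ y ≠ z ∧
    Z.SecondTypeEdge y z ∧ ¬ Z.SecondTypeEdge x y ∧ ¬ Z.SecondTypeEdge x z

/-- `F` is a `(2,2,2)`-face: all three of its edges are of second type. -/
def Is222Face (Z : T.Zigzag) (F : Finset V) : Prop :=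
  ∃ x y z : V, F = {x, y, z} ∧ x ≠ y ∧ x ≠ z ∧ y ≠ z ∧
    Z.SecondTypeEdge x y ∧ Z.SecondTypeEdge y z ∧ Z.SecondTypeEdge x z

/-- `F` is a `(1,1,2)`-face of odd type: with vertices `x, y, z`, where `{y, z}` is the
edge of second type and the zigzag twice passes from `y` to `z`, the zigzag has the
cyclic form `x,y,z, …, y,x,z, …, y,z,x, …`. -/
def Is112OddFace (Z : T.Zigzag) (F : Finset V) : Prop :=
  ∃ x y z : V, F = {x, y, z} ∧ x ≠ y ∧ x ≠ z ∧ y ≠ z ∧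
    Z.SecondTypeEdge y z ∧ ¬ Z.SecondTypeEdge x y ∧ ¬ Z.SecondTypeEdge x z ∧
    Z.PassesTwice y z ∧ Z.CyclicTriples x y z y x z y z x

/-- `F` is a `(1,1,2)`-face of even type: with vertices `x, y, z`, where `{y, z}` is the
edge of second type and the zigzag twice passes from `y` to `z`, the zigzag has the
cyclic form `x,y,z, …, y,z,x, …, y,x,z, …`. -/
def Is112EvenFace (Z : T.Zigzag) (F : Finset V) : Prop :=
  ∃ x y z : V, F = {x, y, z} ∧ x ≠ y ∧ x ≠ z ∧ y ≠ z ∧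
    Z.SecondTypeEdge y z ∧ ¬ Z.SecondTypeEdge x y ∧ ¬ Z.SecondTypeEdge x z ∧
    Z.PassesTwice y z ∧ Z.CyclicTriples x y z y z x y x z

/-- `F` is a `(2,2,2)`-face of first type: with vertices `x, y, z` such that the zigzag
twice passes from `x` to `y`, twice from `y` to `z` and twice from `z` to `x`, the
zigzag has the cyclic form `x,y,z, …, z,x,y, …, y,z,x, …`. -/
def Is222FirstFace (Z : T.Zigzag) (F : Finset V) : Prop :=
  ∃ x y z : V, F = {x, y, z} ∧ x ≠ y ∧ x ≠ z ∧ y ≠ z ∧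
    Z.PassesTwice x y ∧ Z.PassesTwice y z ∧ Z.PassesTwice z x ∧
    Z.CyclicTriples x y z z x y y z x

/-- `F` is a `(2,2,2)`-face of second type: with vertices `x, y, z` such that the zigzag
twice passes from `x` to `y`, twice from `y` to `z` and twice from `z` to `x`, the
zigzag has the cyclic form `x,y,z, …, y,z,x, …, z,x,y, …`. -/
def Is222SecondFace (Z : T.Zigzag) (F : Finset V) : Prop :=
  ∃ x y z : V, F = {x, y, z} ∧ x ≠ y ∧ x ≠ z ∧ y ≠ z ∧
    Z.PassesTwice x y ∧ Z.PassesTwice y z ∧ Z.PassesTwice z x ∧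
    Z.CyclicTriples x y z y z x z x y

/-- `a` is the vertex of the face `F` which does not lie on an edge of `F` of
second type. -/
def IsApex (Z : T.Zigzag) (F : Finset V) (a : V) : Prop :=
  a ∈ F ∧ ∀ y ∈ F, y ≠ a → ¬ Z.SecondTypeEdge a y

end Zigzag

end

section ConnectedSum

variable [DecidableEq V] [DecidableEq V']

/-- The map gluing `Γ'` onto `Γ`: a vertex of `F'` is sent to the corresponding
(under `g`) vertex of `F`, all other vertices of `Γ'` are kept. -/
noncomputable def glueMap [Nonempty V] (F : Finset V) (F' : Finset V') (g : V → V') (y : V') :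
    V ⊕ {y : V' // y ∉ F'} :=
  if h : y ∈ F' then Sum.inl (Function.invFunOn g ↑F y) else Sum.inr ⟨y, h⟩

/-- The connected sum `T #_g T'` of two triangulations along the faces `F` and `F'`,
via the identification `g` of the vertices of `F` with the vertices of `F'`:
the disjoint union of `T` and `T'` in which every vertex `v` of `F` is identified with
`g v` (and the edges of `F` are identified with the corresponding edges of `F'`),
whose faces are all faces of `T` other than `F` together with all faces of `T'`
other than `F'`. -/
noncomputable def connectedSum [Nonempty V] (T : PreTriangulation V) (T' : PreTriangulation V')
    (F : Finset V) (F' : Finset V') (g : V → V') :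
    PreTriangulation (V ⊕ {y : V' // y ∉ F'}) where
  graph :=
    { Adj := fun u v => u ≠ v ∧
        ((∃ x y : V, T.graph.Adj x y ∧ u = Sum.inl x ∧ v = Sum.inl y) ∨
         (∃ x y : V', T'.graph.Adj x y ∧ u = glueMap F F' g x ∧ v = glueMap F F' g y))
      symm := by
        refine ⟨?_⟩
        rintro u v ⟨hne, h⟩
        refine ⟨hne.symm, ?_⟩
        rcases h with ⟨x, y, hxy, hu, hv⟩ | ⟨x, y, hxy, hu, hv⟩
        · exact Or.inl ⟨y, x, hxy.symm, hv, hu⟩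
        · exact Or.inr ⟨y, x, hxy.symm, hv, hu⟩
      loopless := ⟨fun u h => h.1 rfl⟩ }
  faces :=
    {G | (∃ A ∈ T.faces, A ≠ F ∧ G = A.image Sum.inl) ∨
         (∃ A ∈ T'.faces, A ≠ F' ∧ G = A.image (glueMap F F' g))}

end ConnectedSum

/-- `T` and `T'` are isomorphic as graphs together with their collections of faces. -/
def IsIsoTo [DecidableEq V'] (T : PreTriangulation V) (T' : PreTriangulation V') : Prop :=
  ∃ e : V ≃ V', (∀ x y : V, T.graph.Adj x y ↔ T'.graph.Adj (e x) (e y)) ∧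
    (∀ G : Finset V, G ∈ T.faces ↔ G.image e ∈ T'.faces)

/-- The bipyramid `BP n`.  The two apices `a, b` are `Sum.inl true, Sum.inl false`;
the vertices `1, …, n` of the `n`-gon are `Sum.inr 0, …, Sum.inr (n-1)` (that is, the
paper's vertex `i` is `Sum.inr (i - 1)`). -/
def bp (n : ℕ) : PreTriangulation (Bool ⊕ ZMod n) where
  graph :=
    { Adj := fun u v =>
        match u, v with
        | Sum.inl _, Sum.inl _ => False
        | Sum.inl _, Sum.inr _ => True
        | Sum.inr _, Sum.inl _ => True
        | Sum.inr i, Sum.inr j => i ≠ j ∧ (j = i + 1 ∨ i = j + 1)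
      symm := by
        refine ⟨?_⟩
        rintro (s | i) (t | j) h
        · exact h.elim
        · trivial
        · trivial
        · exact ⟨h.1.symm, h.2.symm⟩
      loopless := by
        refine ⟨?_⟩
        rintro (s | i) h
        · exact h
        · exact h.1 rfl }
  faces := {G | ∃ (s : Bool) (i : ZMod n), G = {Sum.inl s, Sum.inr i, Sum.inr (i + 1)}}

/-- The complete graph on four vertices regarded as a combinatorial triangulation whose
faces are all four 3-element vertex subsets. -/
def k4 : PreTriangulation (Fin 4) where
  graph := ⊤
  faces := {G | G.card = 3}

/-- The cyclic sequence `a, 1+c, 2+c, b, 3+c, 4+c, …, a, n-1+c, n+c, b, 1+c, 2+c, a, 3+c, 4+c,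
…, b, n-1+c, n+c` in the bipyramid `BP n` (for `n` even), of length `3 n`, written in the
paper's labels; `c` is an offset.  Here `a = Sum.inl true`, `b = Sum.inl false` and the
paper's vertex `i` is `Sum.inr (i - 1)`. -/
def bpZigSeq (n : ℕ) (c : ZMod n) : ℤ → Bool ⊕ ZMod n := fun i =>
  let j : ℕ := (i % (3 * (n : ℤ))).toNat
  if j % 3 = 0 then Sum.inl (decide (j / 3 % 2 = 0))
  else Sum.inr (((2 * (j / 3) + (if j % 3 = 1 then 0 else 1) : ℕ) : ZMod n) + c)

end PreTriangulation

/-!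
Fix a face `{x, y, z}` and colour each vertex `v` of it by the direction in which the unique
zigzag runs through the face with `v` as middle vertex. Zigzags are the orbits of the
permutation `(a, b, c) ↦ (b, c, d)` of oriented faces (`{b, c, d}` the other face on `{b, c}`),
so in a z-knotted triangulation the zigzag traverses, for each ordering `(u, v, w)` of the face,
either `(u, v, w)` or `(w, v, u)`; never both, since that would make the zigzag symmetric under
a reflection of its index set. The zigzag passes twice from `u` to `v` exactly when it traverses
`(u, v, w)` and `(w, u, v)`, so an edge is of second type iff its ends have the same colour.
With two colours on three vertices, either one edge or all three edges are of second type.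
-/

namespace PreTriangulation

variable {V : Type u} [DecidableEq V] {T : PreTriangulation V}

theorem insert_rotate (a b c : V) : ({a, b, c} : Finset V) = {b, c, a} := by
  ext
  simp only [Finset.mem_insert, Finset.mem_singleton]
  tauto

namespace IsTriangulation

theorem ne_of_insert_mem_faces (hT : T.IsTriangulation) {a b c : V}
    (h : ({a, b, c} : Finset V) ∈ T.faces) : a ≠ b ∧ a ≠ c ∧ b ≠ c := by
  have h3 := hT.face_card _ h
  refine ⟨?_, ?_, ?_⟩ <;> rintro rfl <;>
    simp only [Finset.mem_insert, Finset.mem_singleton, true_or, or_true,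
      Finset.insert_eq_of_mem] at h3 <;>
    exact (Finset.card_le_two.trans_lt (by norm_num)).ne h3

theorem eq_insert_of_mem (hT : T.IsTriangulation) {G : Finset V} {a b c : V}
    (hG : G ∈ T.faces) (ha : a ∈ G) (hb : b ∈ G) (hc : c ∈ G)
    (hab : a ≠ b) (hac : a ≠ c) (hbc : b ≠ c) : G = {a, b, c} := by
  refine (Finset.eq_of_subset_of_card_le ?_ ?_).symm
  · simp [Finset.insert_subset_iff, ha, hb, hc]
  · rw [hT.face_card G hG, Finset.card_eq_three.2 ⟨a, b, c, hab, hac, hbc, rfl⟩]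

theorem exists_ne_face (hT : T.IsTriangulation) {a b : V} (hab : T.graph.Adj a b)
    (G : Finset V) :
    ∃ G' ∈ T.faces, a ∈ G' ∧ b ∈ G' ∧ G' ≠ G := by
  by_contra! h
  have hsub : {F | F ∈ T.faces ∧ a ∈ F ∧ b ∈ F} ⊆ {G} := fun F hF => h F hF.1 hF.2.1 hF.2.2
  have := Set.ncard_le_ncard hsub
  rw [hT.edge_in_two_faces a b hab, Set.ncard_singleton] at this
  omega

theorem eq_or_eq_or_eq (hT : T.IsTriangulation) {a b : V} (hab : T.graph.Adj a b)
    {G₁ G₂ G₃ : Finset V} (h₁ : G₁ ∈ T.faces) (h₂ : G₂ ∈ T.faces) (h₃ : G₃ ∈ T.faces)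
    (ha₁ : a ∈ G₁) (hb₁ : b ∈ G₁) (ha₂ : a ∈ G₂) (hb₂ : b ∈ G₂) (ha₃ : a ∈ G₃) (hb₃ : b ∈ G₃) :
    G₁ = G₂ ∨ G₁ = G₃ ∨ G₂ = G₃ := by
  obtain ⟨P, Q, -, hPQ⟩ := Set.ncard_eq_two.1 (hT.edge_in_two_faces a b hab)
  have m₁ : G₁ ∈ ({P, Q} : Set (Finset V)) := hPQ ▸ ⟨h₁, ha₁, hb₁⟩
  have m₂ : G₂ ∈ ({P, Q} : Set (Finset V)) := hPQ ▸ ⟨h₂, ha₂, hb₂⟩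
  have m₃ : G₃ ∈ ({P, Q} : Set (Finset V)) := hPQ ▸ ⟨h₃, ha₃, hb₃⟩
  simp only [Set.mem_insert_iff, Set.mem_singleton_iff] at m₁ m₂ m₃
  rcases m₁ with rfl | rfl <;> rcases m₂ with rfl | rfl <;> rcases m₃ with rfl | rfl <;> simp

theorem eq_of_insert_mem_faces (hT : T.IsTriangulation) {a b c d d' : V}
    (h : ({a, b, c} : Finset V) ∈ T.faces) (hd : ({b, c, d} : Finset V) ∈ T.faces)
    (hd' : ({b, c, d'} : Finset V) ∈ T.faces) (hda : d ≠ a) (hd'a : d' ≠ a) : d = d' := by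
  obtain ⟨hab, hac, hbc⟩ := hT.ne_of_insert_mem_faces h
  obtain ⟨-, hbd, hcd⟩ := hT.ne_of_insert_mem_faces hd
  rcases hT.eq_or_eq_or_eq (hT.face_adj _ h b (by simp) c (by simp) hbc) h hd hd'
    (by simp) (by simp) (by simp) (by simp) (by simp) (by simp) with h₁ | h₂ | h₃
  · have := (Finset.ext_iff.1 h₁ a).1 (by simp)
    simp only [Finset.mem_insert, Finset.mem_singleton] at this
    tauto
  · have := (Finset.ext_iff.1 h₂ a).1 (by simp)
    simp only [Finset.mem_insert, Finset.mem_singleton] at this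
    tauto
  · have := (Finset.ext_iff.1 h₃ d).1 (by simp)
    simp only [Finset.mem_insert, Finset.mem_singleton] at this
    tauto

theorem exists_insert_mem_faces (hT : T.IsTriangulation) {a b c : V}
    (h : ({a, b, c} : Finset V) ∈ T.faces) : ∃ d, ({b, c, d} : Finset V) ∈ T.faces ∧ d ≠ a := by
  obtain ⟨hab, hac, hbc⟩ := hT.ne_of_insert_mem_faces h
  obtain ⟨G, hG, hbG, hcG, hne⟩ :=
    hT.exists_ne_face (hT.face_adj _ h b (by simp) c (by simp) hbc) {a, b, c}
  obtain ⟨d, hd⟩ : (G \ {b, c}).Nonempty := by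
    rw [← Finset.card_pos]
    have := Finset.le_card_sdiff {b, c} G
    have := Finset.card_le_two (a := b) (b := c)
    rw [hT.face_card G hG] at *
    omega
  simp only [Finset.mem_sdiff, Finset.mem_insert, Finset.mem_singleton, not_or] at hd
  have hG' : G = {b, c, d} :=
    hT.eq_insert_of_mem hG hbG hcG hd.1 hbc (Ne.symm hd.2.1) (Ne.symm hd.2.2)
  refine ⟨d, hG' ▸ hG, ?_⟩
  rintro rfl
  exact hne (hG'.trans (insert_rotate _ _ _).symm)

end IsTriangulation

theorem exists_zigzag_seq_eq (hT : T.IsTriangulation) (s : ℤ → V)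
    (hper : ∃ m : ℕ, 0 < m ∧ Function.Periodic s m)
    (hface : ∀ i, ({s i, s (i + 1), s (i + 2)} : Finset V) ∈ T.faces)
    (hne : ∀ i, s (i + 3) ≠ s i) : ∃ Z : T.Zigzag, Z.seq = s := by
  classical
  have hdist i := hT.ne_of_insert_mem_faces (hface i)
  have three_lt (m : ℕ) (hm : 0 < m) (hp : Function.Periodic s m) : 3 < m := by
    by_contra! h
    have := hp 0
    interval_cases m
    exacts [(hdist 0).1 this.symm, (hdist 0).2.1 this.symm, hne 0 this]
  obtain ⟨hpos, hperiodic⟩ := Nat.find_spec hper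
  refine ⟨{
    n := Nat.find hper
    three_lt_n := three_lt _ hpos hperiodic
    seq := s
    periodic := hperiodic
    n_minimal := fun m hm h => Nat.find_min' hper ⟨hm, h⟩
    seq_ne := fun i => (hdist i).1
    seq_adj := fun i => hT.face_adj _ (hface i) _ (by simp) _ (by simp) (hdist i).1
    face := fun i => {s i, s (i + 1), s (i + 2)}
    face_mem := hface
    subset_face := fun i => subset_rfl
    face_unique := fun i G hG hsub => hT.eq_insert_of_mem hG (hsub (by simp))
      (hsub (by simp)) (hsub (by simp)) (hdist i).1 (hdist i).2.1 (hdist i).2.2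
    face_ne := fun i h => ?_ }, rfl⟩
  have := (Finset.ext_iff.1 h (s i)).1 (by simp)
  simp only [Finset.mem_insert, Finset.mem_singleton] at this
  rcases this with h₁ | h₂ | h₃
  · exact (hdist i).1 h₁
  · exact (hdist i).2.1 (by simpa [add_assoc] using h₂)
  · exact hne i (by simpa [add_assoc] using h₃.symm)

theorem exists_zigzag_tripleAt (hT : T.IsTriangulation) {u v w : V}
    (hF : ({u, v, w} : Finset V) ∈ T.faces) : ∃ Z : T.Zigzag, Z.TripleAt 0 u v w := by
  have := hT.finiteVerts
  let Flag := {t : V × V × V // ({t.1, t.2.1, t.2.2} : Finset V) ∈ T.faces}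
  choose d hd hda using fun t : Flag => hT.exists_insert_mem_faces t.2
  let next (t : Flag) : Flag := ⟨(t.1.2.1, t.1.2.2, d t), hd t⟩
  have hinj : next.Injective := by
    rintro ⟨⟨a, b, c⟩, h⟩ ⟨⟨a', b', c'⟩, h'⟩ heq
    have heq := congrArg Subtype.val heq
    simp only [next, Prod.mk.injEq] at heq
    obtain ⟨rfl, rfl, hdd⟩ := heq
    have hrev {x y z : V} : ({x, y, z} : Finset V) = {z, y, x} := by
      ext; simp only [Finset.mem_insert, Finset.mem_singleton]; tauto
    have : a = a' := hT.eq_of_insert_mem_faces (hrev ▸ hd ⟨(a, b, c), h⟩) (hrev ▸ h)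
      (hrev ▸ h') (hda ⟨(a, b, c), h⟩).symm (hdd ▸ (hda ⟨(a', b, c), h'⟩).symm)
    subst this
    rfl
  let e : Equiv.Perm Flag := Equiv.ofBijective next (Finite.injective_iff_bijective.1 hinj)
  let flag (i : ℤ) : Flag := (e ^ i) ⟨(u, v, w), hF⟩
  have hflag (i : ℤ) : flag (i + 1) = next (flag i) := by
    simp only [flag, add_comm i, zpow_one_add, Equiv.Perm.mul_apply]
    rfl
  let s (i : ℤ) : V := (flag i).1.1
  have hs (i : ℤ) : (flag i).1 = (s i, s (i + 1), s (i + 2)) := by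
    simp only [s, show i + 2 = i + 1 + 1 by ring, hflag, next]
  have hs₃ (i : ℤ) : s (i + 3) = d (flag i) := by
    have := hs (i + 1)
    rw [hflag] at this
    simp only [next, Prod.mk.injEq] at this
    rw [this.2.2, add_assoc]
    norm_num
  obtain ⟨Z, hZ⟩ := exists_zigzag_seq_eq hT s
    ⟨orderOf e, orderOf_pos e, fun i => by
      simp only [s, flag, zpow_add, zpow_natCast, pow_orderOf_eq_one, mul_one]⟩
    (fun i => by have := (flag i).2; rwa [hs i] at this) (fun i => hs₃ i ▸ hda (flag i))
  refine ⟨Z, ?_⟩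
  have := hs 0
  simp only [flag, zpow_zero, Equiv.Perm.one_apply, Prod.mk.injEq, zero_add] at this
  simp only [Zigzag.TripleAt, hZ]
  exact ⟨this.1.symm, this.2.1.symm, this.2.2.symm⟩

namespace Zigzag

variable (Z : T.Zigzag)

theorem seq_periodic : Function.Periodic Z.seq Z.n := Z.periodic

def HasTriple (u v w : V) : Prop := ∃ i, Z.TripleAt i u v w

theorem face_eq_of_tripleAt {i : ℤ} {a b c : V} (hF : ({a, b, c} : Finset V) ∈ T.faces)
    (h : Z.TripleAt i a b c) : Z.face i = {a, b, c} := by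
  obtain ⟨rfl, rfl, rfl⟩ := h
  exact (Z.face_unique i _ hF subset_rfl).symm

theorem seq_add_two_ne (hT : T.IsTriangulation) (i : ℤ) : Z.seq (i + 2) ≠ Z.seq i := by
  intro h
  obtain ⟨G, hG, h₀, h₁, hne⟩ := hT.exists_ne_face (Z.seq_adj i) (Z.face i)
  exact hne (Z.face_unique i G hG (by simp [Finset.insert_subset_iff, h, h₀, h₁]))

theorem seq_add_one_ne_add_two (i : ℤ) : Z.seq (i + 1) ≠ Z.seq (i + 2) := by
  simpa [add_assoc] using Z.seq_ne (i + 1)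

theorem face_eq (hT : T.IsTriangulation) (i : ℤ) :
    Z.face i = {Z.seq i, Z.seq (i + 1), Z.seq (i + 2)} :=
  hT.eq_insert_of_mem (Z.face_mem i) (Z.subset_face i (by simp)) (Z.subset_face i (by simp))
    (Z.subset_face i (by simp)) (Z.seq_ne i) (Z.seq_add_two_ne hT i).symm
    (Z.seq_add_one_ne_add_two i)

theorem insert_mem_faces (hT : T.IsTriangulation) (i : ℤ) :
    ({Z.seq i, Z.seq (i + 1), Z.seq (i + 2)} : Finset V) ∈ T.faces :=
  Z.face_eq hT i ▸ Z.face_mem i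

theorem tripleAt_mem_faces (hT : T.IsTriangulation) {i : ℤ} {a b c : V}
    (h : Z.TripleAt i a b c) : ({a, b, c} : Finset V) ∈ T.faces := by
  obtain ⟨rfl, rfl, rfl⟩ := h
  exact Z.insert_mem_faces hT i

theorem tripleAt_add_one {i : ℤ} {a b c : V} (h : Z.TripleAt i a b c) :
    Z.TripleAt (i + 1) b c (Z.seq (i + 3)) := by
  refine ⟨h.2.1, ?_, ?_⟩
  · rw [add_assoc]; exact h.2.2
  · rw [add_assoc]; rfl

theorem seq_add_three_ne (hT : T.IsTriangulation) (i : ℤ) : Z.seq (i + 3) ≠ Z.seq i := by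
  intro h
  apply Z.face_ne i
  refine (Z.face_unique i _ (Z.face_mem (i + 1)) ?_).symm
  rw [Z.face_eq hT (i + 1)]
  simp [Finset.insert_subset_iff, add_assoc, ← h]

theorem seq_add_three_eq (hT : T.IsTriangulation) {Z Z' : T.Zigzag} {i j : ℤ} {a b c : V}
    (h : Z.TripleAt i a b c) (h' : Z'.TripleAt j a b c) : Z.seq (i + 3) = Z'.seq (j + 3) :=
  hT.eq_of_insert_mem_faces (Z.tripleAt_mem_faces hT h)
    (Z.tripleAt_mem_faces hT (Z.tripleAt_add_one h))
    (Z'.tripleAt_mem_faces hT (Z'.tripleAt_add_one h'))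
    (h.1 ▸ Z.seq_add_three_ne hT i) (h'.1 ▸ Z'.seq_add_three_ne hT j)

theorem seq_add_eq_of_tripleAt (hT : T.IsTriangulation) {Z Z' : T.Zigzag} {i j : ℤ}
    {a b c : V} (h : Z.TripleAt i a b c) (h' : Z'.TripleAt j a b c) (k : ℤ) :
    Z.seq (i + k) = Z'.seq (j + k) := by
  have hnat : ∀ m : ℕ, Z.TripleAt (i + m) (Z'.seq (j + m)) (Z'.seq (j + m + 1))
      (Z'.seq (j + m + 2)) := by
    intro m
    induction m with
    | zero => simpa [← h'.1, ← h'.2.1, ← h'.2.2] using h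
    | succ m ih =>
      have := Z.tripleAt_add_one ih
      rw [seq_add_three_eq hT ih ⟨rfl, rfl, rfl⟩] at this
      push_cast
      simpa only [← add_assoc, show j + m + 3 = j + m + 1 + 2 by ring,
        show j + m + 2 = j + m + 1 + 1 by ring] using this
  set P : ℤ := Z.n * Z'.n
  have hP : 0 < P := by have := Z.three_lt_n; have := Z'.three_lt_n; positivity
  have hZ : Function.Periodic (fun k => Z.seq (i + k)) P :=
    (by simpa [P, mul_comm] using Z.seq_periodic.nat_mul Z'.n :
      Function.Periodic Z.seq P).const_add i
  have hZ' : Function.Periodic (fun k => Z'.seq (j + k)) P :=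
    (by simpa [P] using Z'.seq_periodic.nat_mul Z.n : Function.Periodic Z'.seq P).const_add j
  have hk : k % P = k - (k / P) * P := by rw [Int.emod_def, mul_comm]
  have hnonneg : 0 ≤ k % P := Int.emod_nonneg k hP.ne'
  have e := hZ.sub_int_mul_eq (x := k) (k / P)
  have e' := hZ'.sub_int_mul_eq (x := k) (k / P)
  simp only [Int.cast_id] at e e'
  have := (hnat (k % P).toNat).1
  rwa [Int.toNat_of_nonneg hnonneg, hk, e, e'] at this

theorem dvd_of_periodic {d : ℤ} (h : Function.Periodic Z.seq d) :
    (Z.n : ℤ) ∣ d := by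
  have hn := Z.three_lt_n
  have hper : Function.Periodic Z.seq (d % Z.n) := by
    rw [Int.emod_def]
    exact h.sub_period (by simpa [mul_comm] using Z.seq_periodic.int_mul (d / Z.n))
  have h0 : 0 ≤ d % Z.n := Int.emod_nonneg _ (by omega)
  have hlt : d % Z.n < Z.n := Int.emod_lt_of_pos _ (by omega)
  by_contra hnd
  have hpos : 0 < d % Z.n :=
    lt_of_le_of_ne h0 (fun h => hnd (Int.dvd_of_emod_eq_zero h.symm))
  have := Z.n_minimal (d % Z.n).toNat (by omega) (by rwa [Int.toNat_of_nonneg h0])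
  omega

theorem intCast_eq_of_tripleAt (hT : T.IsTriangulation) {i j : ℤ} {a b c : V}
    (h : Z.TripleAt i a b c) (h' : Z.TripleAt j a b c) : (i : ZMod Z.n) = j := by
  rw [ZMod.intCast_eq_intCast_iff_dvd_sub]
  refine Z.dvd_of_periodic fun t => ?_
  have := seq_add_eq_of_tripleAt hT h h' (t - i)
  rw [add_sub_cancel] at this
  rw [this]
  ring_nf

theorem seq_eq_of_intCast_eq {i j : ℤ} (h : (i : ZMod Z.n) = j) :
    Z.seq i = Z.seq j := by
  obtain ⟨m, hm⟩ := (ZMod.intCast_eq_intCast_iff_dvd_sub i j Z.n).1 h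
  rw [show j = i + m * Z.n by linarith]
  exact (by simpa using Z.seq_periodic.int_mul m i : Z.seq (i + m * Z.n) = Z.seq i).symm

theorem insert_seq_neg_eq (i : ℤ) :
    ({Z.seq (-i), Z.seq (-(i + 1)), Z.seq (-(i + 2))} : Finset V) =
      {Z.seq (-i - 2), Z.seq (-i - 2 + 1), Z.seq (-i - 2 + 2)} := by
  rw [show -i - 2 + 1 = -(i + 1) by ring, show -i - 2 + 2 = -i by ring,
    show -i - 2 = -(i + 2) by ring]
  ext
  simp only [Finset.mem_insert, Finset.mem_singleton]
  tauto

def reverse : T.Zigzag where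
  n := Z.n
  three_lt_n := Z.three_lt_n
  seq i := Z.seq (-i)
  periodic i := by
    have := Z.periodic (-(i + Z.n))
    rwa [show -(i + Z.n) + Z.n = -i by ring, eq_comm] at this
  n_minimal m hm h := Z.n_minimal m hm fun i => by
    have := h (-i - m)
    rwa [show -(-i - m + m) = i by ring, show -(-i - m) = i + m by ring, eq_comm] at this
  seq_ne i := by
    have := Z.seq_ne (-(i + 1))
    rw [show -(i + 1) + 1 = -i by ring] at this
    exact this.symm
  seq_adj i := by
    have := Z.seq_adj (-(i + 1))
    rw [show -(i + 1) + 1 = -i by ring] at this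
    exact this.symm
  face i := Z.face (-i - 2)
  face_mem i := Z.face_mem _
  subset_face i := Z.insert_seq_neg_eq i ▸ Z.subset_face (-i - 2)
  face_unique i G hG hsub := Z.face_unique (-i - 2) G hG (Z.insert_seq_neg_eq i ▸ hsub)
  face_ne i := by
    have := Z.face_ne (-(i + 1) - 2)
    rw [show -(i + 1) - 2 + 1 = -i - 2 by ring] at this
    exact this.symm

theorem HasTriple.not_reverse (hT : T.IsTriangulation) {Z : T.Zigzag} {u v w : V}
    (h : Z.HasTriple u v w) : ¬ Z.HasTriple w v u := by
  rintro ⟨j, hj⟩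
  obtain ⟨i, hi⟩ := h
  have hrev : Z.reverse.TripleAt (-j - 2) u v w := by
    refine ⟨?_, ?_, ?_⟩ <;> simp only [reverse]
    · rw [show -(-j - 2) = j + 2 by ring]; exact hj.2.2
    · rw [show -(-j - 2 + 1) = j + 1 by ring]; exact hj.2.1
    · rw [show -(-j - 2 + 2) = j by ring]; exact hj.1
  have key (k : ℤ) : Z.seq (i + k) = Z.seq (j + 2 - k) := by
    rw [seq_add_eq_of_tripleAt hT hi hrev k]
    simp only [reverse]
    rw [show -(-j - 2 + k) = j + 2 - k by ring]
  -- `Z` is symmetric under the reflection `k ↦ i + j + 2 - k`, whose centre is a vertex or the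
  -- midpoint of an edge of the zigzag
  obtain ⟨m, hm | hm⟩ := Int.even_or_odd' (j - i)
  · apply Z.seq_add_two_ne hT (i + m)
    rw [key m]
    congr 1
    omega
  · apply Z.seq_ne (i + (m + 1))
    rw [key (m + 1)]
    congr 1
    omega

theorem tripleAt_or_tripleAt (hT : T.IsTriangulation) {i : ℤ} {u v w : V}
    (hF : ({u, v, w} : Finset V) ∈ T.faces) (hu : Z.seq i = u) (hv : Z.seq (i + 1) = v) :
    Z.TripleAt i u v w ∨ Z.TripleAt (i - 1) w u v := by
  by_cases hw : Z.seq (i - 1) = w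
  · right
    refine ⟨hw, by rwa [sub_add_cancel], by rwa [show i - 1 + 2 = i + 1 by ring]⟩
  · left
    refine ⟨hu, hv, hT.eq_of_insert_mem_faces ?_ ?_ hF ?_ (Ne.symm hw)⟩
    · simpa [show i - 1 + 2 = i + 1 by ring, hu, hv] using Z.insert_mem_faces hT (i - 1)
    · simpa [hu, hv] using Z.insert_mem_faces hT i
    · simpa [show i - 1 + 3 = i + 2 by ring] using Z.seq_add_three_ne hT (i - 1)

theorem passesTwice_iff (hT : T.IsTriangulation) {u v w : V}
    (hF : ({u, v, w} : Finset V) ∈ T.faces) :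
    Z.PassesTwice u v ↔ Z.HasTriple u v w ∧ Z.HasTriple w u v := by
  constructor
  · rintro ⟨i, j, hij, hi, hi₁, hj, hj₁⟩
    rcases Z.tripleAt_or_tripleAt hT hF hi hi₁ with h | h <;>
      rcases Z.tripleAt_or_tripleAt hT hF hj hj₁ with h' | h'
    · exact absurd (Z.intCast_eq_of_tripleAt hT h h') hij
    · exact ⟨⟨i, h⟩, ⟨j - 1, h'⟩⟩
    · exact ⟨⟨j, h'⟩, ⟨i - 1, h⟩⟩
    · have := Z.intCast_eq_of_tripleAt hT h h'
      push_cast at this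
      exact absurd (sub_left_inj.1 this) hij
  · rintro ⟨⟨i, hi⟩, ⟨j, hj⟩⟩
    refine ⟨i, j + 1, fun hij => ?_, hi.1, hi.2.1, hj.2.1, by rw [add_assoc]; exact hj.2.2⟩
    -- a second passage at the same position would make two consecutive faces equal to `{u, v, w}`
    have hprev : Z.TripleAt (i - 1) w u v := by
      refine ⟨?_, by rw [sub_add_cancel]; exact hi.1, ?_⟩
      · rw [← hj.1]
        exact Z.seq_eq_of_intCast_eq (by push_cast [hij]; ring)
      · rw [show i - 1 + 2 = i + 1 by ring]; exact hi.2.1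
    apply Z.face_ne (i - 1)
    rw [sub_add_cancel, Z.face_eq_of_tripleAt hF hi,
      Z.face_eq_of_tripleAt (by rwa [Finset.insert_comm, Finset.pair_comm]) hprev]
    ext
    simp only [Finset.mem_insert, Finset.mem_singleton]
    tauto

theorem hasTriple_or_hasTriple_reverse (hT : T.IsTriangulation) (hz : T.ZKnotted)
    {u v w : V} (hF : ({u, v, w} : Finset V) ∈ T.faces) :
    Z.HasTriple u v w ∨ Z.HasTriple w v u := by
  obtain ⟨Z', h₀, h₁, h₂⟩ := exists_zigzag_tripleAt hT hF
  rcases hz.2 Z Z' with ⟨k, hk⟩ | ⟨k, hk⟩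
  · refine Or.inl ⟨k, ?_, ?_, ?_⟩
    · simpa [← h₀] using (hk 0).symm
    · simpa [← h₁, add_comm] using (hk 1).symm
    · simpa [← h₂, add_comm] using (hk 2).symm
  · refine Or.inr ⟨k - 2, ?_, ?_, ?_⟩
    · simpa [← h₂] using (hk 2).symm
    · simpa [← h₁, show k - 2 + 1 = k - 1 by ring] using (hk 1).symm
    · simpa [← h₀] using (hk 0).symm

theorem hasTriple_reverse_iff (hT : T.IsTriangulation) (hz : T.ZKnotted) {u v w : V}
    (hF : ({u, v, w} : Finset V) ∈ T.faces) : Z.HasTriple w v u ↔ ¬ Z.HasTriple u v w :=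
  ⟨fun h h' => h'.not_reverse hT h,
    fun h => (Z.hasTriple_or_hasTriple_reverse hT hz hF).resolve_left h⟩

theorem secondTypeEdge_comm {u v : V} : Z.SecondTypeEdge u v ↔ Z.SecondTypeEdge v u :=
  or_comm

theorem secondTypeEdge_iff (hT : T.IsTriangulation) (hz : T.ZKnotted) {u v w : V}
    (hF : ({u, v, w} : Finset V) ∈ T.faces) :
    Z.SecondTypeEdge u v ↔ (Z.HasTriple w u v ↔ Z.HasTriple u v w) := by
  have hF' : ({v, u, w} : Finset V) ∈ T.faces := by rwa [Finset.insert_comm]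
  have hF'' : ({w, u, v} : Finset V) ∈ T.faces := by rwa [insert_rotate]
  rw [SecondTypeEdge, Z.passesTwice_iff hT hF, Z.passesTwice_iff hT hF',
    Z.hasTriple_reverse_iff hT hz hF, Z.hasTriple_reverse_iff hT hz hF'']
  tauto

theorem Is222Face.secondTypeEdge {Z : T.Zigzag} {F : Finset V} (h : Z.Is222Face F) {a b : V}
    (ha : a ∈ F) (hb : b ∈ F) (hab : a ≠ b) : Z.SecondTypeEdge a b := by
  obtain ⟨x, y, z, rfl, -, -, -, hxy, hyz, hxz⟩ := h
  simp only [Finset.mem_insert, Finset.mem_singleton] at ha hb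
  rcases ha with rfl | rfl | rfl <;> rcases hb with rfl | rfl | rfl <;>
    first
    | exact absurd rfl hab
    | assumption
    | exact Z.secondTypeEdge_comm.1 ‹_›

theorem is112Face_or_is222Face {x y z : V} {F : Finset V} (hF : F = {x, y, z})
    (hxy : x ≠ y) (hxz : x ≠ z) (hyz : y ≠ z) {cx cy cz : Prop}
    (hsxy : Z.SecondTypeEdge x y ↔ (cx ↔ cy)) (hsyz : Z.SecondTypeEdge y z ↔ (cy ↔ cz))
    (hszx : Z.SecondTypeEdge z x ↔ (cz ↔ cx)) : Z.Is112Face F ∨ Z.Is222Face F := by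
  have hsxz := Z.secondTypeEdge_comm.trans hszx
  by_cases hcxy : cx ↔ cy <;> by_cases hcyz : cy ↔ cz
  · exact Or.inr ⟨x, y, z, hF, hxy, hxz, hyz, hsxy.2 hcxy, hsyz.2 hcyz,
      hsxz.2 (hcxy.trans hcyz).symm⟩
  · refine Or.inl ⟨z, x, y, hF.trans (insert_rotate z x y).symm, hxz.symm, hyz.symm,
      hxy, hsxy.2 hcxy, fun h => hcyz (hcxy.symm.trans (hszx.1 h).symm),
      fun h => hcyz ((Z.secondTypeEdge_comm.trans hsyz).1 h)⟩
  · exact Or.inl ⟨x, y, z, hF, hxy, hxz, hyz, hsyz.2 hcyz, fun h => hcxy (hsxy.1 h),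
      fun h => hcxy ((hsxz.1 h).symm.trans hcyz.symm)⟩
  · refine Or.inl ⟨y, x, z, hF.trans (Finset.insert_comm _ _ _), hxy.symm, hyz, hxz,
      hsxz.2 (by tauto), fun h => hcxy ((Z.secondTypeEdge_comm.trans hsxy).1 h),
      fun h => hcyz (hsyz.1 h)⟩

end Zigzag

end PreTriangulation

open PreTriangulation

theorem statement_0 {V : Type u} [DecidableEq V] (T : PreTriangulation V)
    (hT : T.IsTriangulation) (hz : T.ZKnotted) (Z : T.Zigzag)
    (F : Finset V) (hF : F ∈ T.faces) :
    (Z.Is112Face F ∨ Z.Is222Face F) ∧ ¬ (Z.Is112Face F ∧ Z.Is222Face F) := by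
  obtain ⟨x, y, z, hxy, hxz, hyz, hxyz⟩ := Finset.card_eq_three.1 (hT.face_card _ hF)
  rw [hxyz] at hF
  refine ⟨Z.is112Face_or_is222Face hxyz hxy hxz hyz (Z.secondTypeEdge_iff hT hz hF)
    (Z.secondTypeEdge_iff hT hz (insert_rotate x y z ▸ hF))
    (Z.secondTypeEdge_iff hT hz (insert_rotate y z x ▸ insert_rotate x y z ▸ hF)), ?_⟩
  rintro ⟨⟨a, b, c, habc, hab, -, -, -, hnab, -⟩, h222⟩
  exact hnab (h222.secondTypeEdge (by simp [habc]) (by simp [habc]) hab)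
end

section
/- If n ≥ 4 is even, then the bipyramid BP_n is not z-knotted, i.e., it has at least two zigzags up to cyclic shift and reversal. -/
universe u v

/-!
For even `n` the sequence `a, 1, 2, b, 3, 4, a, 5, 6, …` (apices alternating, two rim vertices
between consecutive apices) closes up, and consecutive triples are distinct faces, so it is a
zigzag; so is its rotation `a, 2, 3, b, 4, 5, …` by one rim vertex. No shift identifies them: in
each, the rim vertex right after `a` has a fixed parity, and the parities differ. No reflection
does either: between two apices the first sequence runs up the rim while the reflected one runs
down.
-/

lemma ZMod.natCast_ne_zero_of_lt {a n : ℕ} (ha : 0 < a) (h : a < n) : (a : ZMod n) ≠ 0 := by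
  rw [Ne, ZMod.natCast_eq_zero_iff]
  exact Nat.not_dvd_of_pos_of_lt ha h

namespace PreTriangulation

namespace Zigzag

variable {V : Type u} [DecidableEq V] {T : PreTriangulation V}

noncomputable def ofSeq (hcard : ∀ F ∈ T.faces, F.card ≤ 3)
    (hadj : ∀ F ∈ T.faces, ∀ x ∈ F, ∀ y ∈ F, x ≠ y → T.graph.Adj x y)
    (s : ℤ → V) (hper : ∃ p : ℕ, 0 < p ∧ Function.Periodic s p)
    (hdist : ∀ (i : ℤ) (k : ℕ), 0 < k → k < 4 → s i ≠ s (i + k))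
    (hface : ∀ i, ({s i, s (i + 1), s (i + 2)} : Finset V) ∈ T.faces) : T.Zigzag where
  n := sInf {m : ℕ | 0 < m ∧ Function.Periodic s m}
  three_lt_n := by
    obtain ⟨hpos, hm⟩ : sInf {m : ℕ | 0 < m ∧ Function.Periodic s m} ∈ _ := Nat.sInf_mem hper
    by_contra! hle
    exact hdist 0 _ hpos (by omega) (hm 0).symm
  seq := s
  periodic := (Nat.sInf_mem hper).2
  n_minimal _ hm hperm := Nat.sInf_le ⟨hm, hperm⟩
  seq_ne i := hdist i 1 one_pos (by norm_num)
  seq_adj i := hadj _ (hface i) _ (by simp) _ (by simp) (hdist i 1 one_pos (by norm_num))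
  face i := {s i, s (i + 1), s (i + 2)}
  face_mem := hface
  subset_face _ := subset_rfl
  face_unique i G hG hsub := by
    have hcard3 : ({s i, s (i + 1), s (i + 2)} : Finset V).card = 3 := by
      refine Finset.card_eq_three.mpr ⟨_, _, _, hdist i 1 one_pos (by norm_num),
        hdist i 2 two_pos (by norm_num), ?_, rfl⟩
      simpa [add_assoc] using hdist (i + 1) 1 one_pos (by norm_num)
    exact (Finset.eq_of_subset_of_card_le hsub (hcard3 ▸ hcard G hG)).symm
  face_ne i h := by
    have hmem : s i ∈ ({s (i + 1), s (i + 2), s (i + 3)} : Finset V) := by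
      rw [show i + 2 = i + 1 + 1 by ring, show i + 3 = i + 1 + 2 by ring, ← h]
      simp
    simp only [Finset.mem_insert, Finset.mem_singleton] at hmem
    rcases hmem with h1 | h2 | h3
    · exact hdist i 1 one_pos (by norm_num) h1
    · exact hdist i 2 two_pos (by norm_num) h2
    · exact hdist i 3 three_pos (by norm_num) h3

end Zigzag

section Bipyramid

variable {n : ℕ}

lemma card_le_three_of_mem_bp_faces {F : Finset (Bool ⊕ ZMod n)} (hF : F ∈ (bp n).faces) :
    F.card ≤ 3 := by
  obtain ⟨s, i, rfl⟩ := hF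
  exact Finset.card_le_three

lemma adj_of_mem_bp_faces {F : Finset (Bool ⊕ ZMod n)} (hF : F ∈ (bp n).faces)
    {x : Bool ⊕ ZMod n} (hx : x ∈ F) {y : Bool ⊕ ZMod n} (hy : y ∈ F) (hxy : x ≠ y) :
    (bp n).graph.Adj x y := by
  obtain ⟨s, i, rfl⟩ := hF
  simp only [Finset.mem_insert, Finset.mem_singleton] at hx hy
  rcases hx with rfl | rfl | rfl <;> rcases hy with rfl | rfl | rfl <;>
    first | exact absurd rfl hxy | trivial | exact ⟨fun h => hxy (congrArg Sum.inr h), by simp⟩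

variable (c : ZMod n)

lemma bpZigSeq_periodic : Function.Periodic (bpZigSeq n c) (3 * n : ℕ) := by
  intro i
  simp only [bpZigSeq, Nat.cast_mul, Nat.cast_ofNat, Int.add_emod_right]

/-- Reducing `3 * q + r` modulo `3 * n` reduces `q` modulo `n`; as `n` is even this keeps the
parity of `q`, which picks the apex. -/
lemma bpZigSeq_three_mul_add (hn : 0 < n) (he : Even n) (q : ℤ) (r : ℕ) (hr : r < 3) :
    bpZigSeq n c (3 * q + r) = if r = 0 then Sum.inl (decide (q % 2 = 0))
      else Sum.inr (2 * q + (if r = 1 then 0 else 1) + c) := by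
  have hn' : (0 : ℤ) < n := by exact_mod_cast hn
  have hmod := Int.emod_nonneg q hn'.ne'
  have hj : ((3 * q + r) % (3 * (n : ℤ))).toNat = 3 * (q % n).toNat + r := by
    have hsplit : 3 * q + r = (3 * (q % n) + r) + 3 * n * (q / n) := by
      linear_combination 3 * (Int.mul_ediv_add_emod q n).symm
    rw [hsplit, Int.add_mul_emod_self_left,
      Int.emod_eq_of_lt (by omega) (by have := Int.emod_lt_of_pos q hn'; omega)]
    omega
  have hpar : (q % n).toNat % 2 = 0 ↔ q % 2 = 0 := by
    have := Int.emod_emod_of_dvd q (Int.natCast_dvd_natCast.mpr (even_iff_two_dvd.mp he))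
    omega
  have hcast : (((q % n).toNat : ℕ) : ZMod n) = q := by
    rw [← Int.cast_natCast, Int.toNat_of_nonneg hmod, ZMod.intCast_mod]
  have hdiv : (3 * (q % n).toNat + r) / 3 = (q % n).toNat := by omega
  have hrem : (3 * (q % n).toNat + r) % 3 = r := by omega
  simp only [bpZigSeq, hj, hdiv, hrem, hpar]
  interval_cases r <;> simp [hcast]

lemma bpZigSeq_three_mul_add_of_lt_six (hn : 0 < n) (he : Even n) (q : ℤ) (r : ℕ) (hr : r < 6) :
    bpZigSeq n c (3 * q + r) =
      if r = 0 then Sum.inl (decide (q % 2 = 0))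
      else if r = 1 then Sum.inr (2 * q + c)
      else if r = 2 then Sum.inr (2 * q + 1 + c)
      else if r = 3 then Sum.inl (decide ((q + 1) % 2 = 0))
      else if r = 4 then Sum.inr (2 * q + 2 + c)
      else Sum.inr (2 * q + 3 + c) := by
  rcases Nat.lt_or_ge r 3 with hr3 | hr3
  · rw [bpZigSeq_three_mul_add c hn he q r hr3]
    interval_cases r <;> simp
  · rw [show 3 * q + r = 3 * (q + 1) + (r - 3 : ℕ) by push_cast [hr3]; ring,
      bpZigSeq_three_mul_add c hn he (q + 1) (r - 3) (by omega)]
    interval_cases r <;> norm_num <;> ring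

lemma bpZigSeq_ne_add (hn : 2 < n) (he : Even n) (i : ℤ) (k : ℕ) (hk : 0 < k) (hk4 : k < 4) :
    bpZigSeq n c i ≠ bpZigSeq n c (i + k) := by
  have h1 : (1 : ZMod n) ≠ 0 := by exact_mod_cast ZMod.natCast_ne_zero_of_lt one_pos (by omega)
  have h2 : (2 : ZMod n) ≠ 0 := by exact_mod_cast ZMod.natCast_ne_zero_of_lt two_pos hn
  obtain ⟨q, r, hr, rfl⟩ : ∃ (q : ℤ) (r : ℕ), r < 3 ∧ i = 3 * q + r :=
    ⟨i / 3, (i % 3).toNat, by omega, by omega⟩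
  rw [add_assoc, ← Nat.cast_add, bpZigSeq_three_mul_add_of_lt_six c (by omega) he q r (by omega),
    bpZigSeq_three_mul_add_of_lt_six c (by omega) he q (r + k) (by omega)]
  interval_cases r <;> interval_cases k <;>
    simp only [Nat.reduceAdd, Nat.reduceEqDiff, reduceIte, ne_eq, reduceCtorEq, not_false_eq_true,
      Sum.inl.injEq, Sum.inr.injEq, add_left_inj, decide_eq_decide] <;>
    first
    | omega
    | exact fun h => h1 (by linear_combination -h)
    | exact fun h => h2 (by linear_combination -h)

lemma bpZigSeq_triple_mem_faces (hn : 0 < n) (he : Even n) (i : ℤ) :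
    ({bpZigSeq n c i, bpZigSeq n c (i + 1), bpZigSeq n c (i + 2)} : Finset _) ∈ (bp n).faces := by
  obtain ⟨q, r, hr, rfl⟩ : ∃ (q : ℤ) (r : ℕ), r < 3 ∧ i = 3 * q + r :=
    ⟨i / 3, (i % 3).toNat, by omega, by omega⟩
  rw [show 3 * q + r + 1 = 3 * q + (r + 1 : ℕ) by push_cast; ring,
    show 3 * q + r + 2 = 3 * q + (r + 2 : ℕ) by push_cast; ring,
    bpZigSeq_three_mul_add_of_lt_six c hn he q r (by omega),
    bpZigSeq_three_mul_add_of_lt_six c hn he q (r + 1) (by omega),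
    bpZigSeq_three_mul_add_of_lt_six c hn he q (r + 2) (by omega)]
  interval_cases r <;> simp only [Nat.reduceAdd, Nat.reduceEqDiff, reduceIte]
  · exact ⟨_, 2 * q + c, by rw [add_right_comm]⟩
  · exact ⟨_, 2 * q + c, by rw [add_right_comm, Finset.pair_comm, Finset.insert_comm]⟩
  · refine ⟨decide ((q + 1) % 2 = 0), 2 * q + 1 + c, ?_⟩
    rw [Finset.insert_comm, show (2 * q + 2 + c : ZMod n) = 2 * q + 1 + c + 1 by ring]

noncomputable def bpZigzag (hn : 2 < n) (he : Even n) : (bp n).Zigzag :=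
  Zigzag.ofSeq (fun _ => card_le_three_of_mem_bp_faces)
    (fun _ hF _ hx _ hy => adj_of_mem_bp_faces hF hx hy)
    (bpZigSeq n c) ⟨3 * n, by omega, bpZigSeq_periodic c⟩
    (bpZigSeq_ne_add c hn he) (bpZigSeq_triple_mem_faces c (by omega) he)

lemma bpZigSeq_start (hn : 0 < n) (he : Even n) :
    bpZigSeq n c 0 = Sum.inl true ∧ bpZigSeq n c 1 = Sum.inr c ∧
      bpZigSeq n c 2 = Sum.inr (1 + c) := by
  have h := bpZigSeq_three_mul_add_of_lt_six c hn he 0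
  exact ⟨by simpa using h 0 (by norm_num), by simpa using h 1 (by norm_num),
    by simpa using h 2 (by norm_num)⟩

lemma three_dvd_of_bpZigSeq_eq_inl (hn : 0 < n) (he : Even n) {k : ℤ} {s : Bool}
    (hk : bpZigSeq n c k = Sum.inl s) : 3 ∣ k := by
  obtain ⟨t, r, hr, rfl⟩ : ∃ (t : ℤ) (r : ℕ), r < 3 ∧ k = 3 * t + r :=
    ⟨k / 3, (k % 3).toNat, by omega, by omega⟩
  rw [bpZigSeq_three_mul_add_of_lt_six c hn he t r (by omega)] at hk
  interval_cases r
  · exact ⟨t, by simp⟩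
  all_goals simp at hk

lemma bpZigSeq_one_ne_shift (hn : 0 < n) (he : Even n) (k : ℤ) :
    ¬ ∀ i, bpZigSeq n 1 i = bpZigSeq n 0 (i + k) := by
  intro h
  obtain ⟨h0, h1, -⟩ := bpZigSeq_start (1 : ZMod n) hn he
  obtain ⟨t, rfl⟩ := three_dvd_of_bpZigSeq_eq_inl 0 hn he ((zero_add k ▸ h 0).symm.trans h0)
  have hrim := h 1
  rw [h1, show 1 + 3 * t = 3 * t + (1 : ℕ) by push_cast; ring,
    bpZigSeq_three_mul_add_of_lt_six 0 hn he t 1 (by norm_num)] at hrim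
  simp only [one_ne_zero, reduceIte, add_zero, Sum.inr.injEq] at hrim
  have hrim₂ := congrArg (ZMod.castHom (even_iff_two_dvd.mp he) (ZMod 2)) hrim
  rw [map_one, map_mul, map_intCast, map_ofNat, show (2 : ZMod 2) = 0 from rfl, zero_mul] at hrim₂
  exact one_ne_zero hrim₂

lemma bpZigSeq_one_ne_reflect (hn : 2 < n) (he : Even n) (k : ℤ) :
    ¬ ∀ i, bpZigSeq n 1 i = bpZigSeq n 0 (k - i) := by
  intro h
  obtain ⟨h0, h1, h2⟩ := bpZigSeq_start (1 : ZMod n) (by omega) he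
  obtain ⟨t, rfl⟩ := three_dvd_of_bpZigSeq_eq_inl 0 (by omega) he ((sub_zero k ▸ h 0).symm.trans h0)
  have hdown₁ := h 1
  have hdown₂ := h 2
  rw [h1, show 3 * t - 1 = 3 * (t - 1) + (2 : ℕ) by push_cast; ring,
    bpZigSeq_three_mul_add_of_lt_six 0 (by omega) he (t - 1) 2 (by norm_num)] at hdown₁
  rw [h2, show 3 * t - 2 = 3 * (t - 1) + (1 : ℕ) by push_cast; ring,
    bpZigSeq_three_mul_add_of_lt_six 0 (by omega) he (t - 1) 1 (by norm_num)] at hdown₂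
  simp only [one_ne_zero, OfNat.ofNat_ne_zero, OfNat.ofNat_ne_one, reduceIte, add_zero,
    Sum.inr.injEq, Int.cast_sub, Int.cast_one] at hdown₁ hdown₂
  exact ZMod.natCast_ne_zero_of_lt two_pos hn (by push_cast; linear_combination hdown₂ - hdown₁)

end Bipyramid

end PreTriangulation

open PreTriangulation

theorem statement_4 (n : ℕ) (h4 : 4 ≤ n) (he : Even n) :
    ¬ (bp n).ZKnotted ∧ ∃ Z Z' : (bp n).Zigzag, ¬ ZigzagEquiv Z Z' := by
  have hne : ¬ ZigzagEquiv (bpZigzag 0 (by omega) he) (bpZigzag 1 (by omega) he) := by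
    rintro (⟨k, hk⟩ | ⟨k, hk⟩)
    · exact bpZigSeq_one_ne_shift (by omega) he k hk
    · exact bpZigSeq_one_ne_reflect (by omega) he k hk
  exact ⟨fun hZ => hne (hZ.2 _ _), _, _, hne⟩
end
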